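/- Let x, y ∈ ℝ^n. If xᵀ(vvᵀ)x ≤ yᵀ(vvᵀ)y for every vector v ∈ ℝ^n (i.e., (vᵀx)² ≤ (vᵀy)² for all v), and additionally xᵀx ≤ yᵀy, then there exists α ∈ ℝ with −1 ≤ α ≤ 1 such that x = α y. In other words, in the characterization of collinearity with scale factor in [−1,1], it suffices to test only rank-one positive semidefinite matrices N = vvᵀ together with the identity matrix N = I. -/

import Mathlib

open Matrix

/-!
Since `(v ⬝ᵥ x)² ≤ (v ⬝ᵥ y)²`, every vector orthogonal to `y` is orthogonal to `x`. Testing this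
with `w = x - α • y`, `α = (y ⬝ᵥ x) / (y ⬝ᵥ y)`, which is orthogonal to `y` and has
`w ⬝ᵥ x = w ⬝ᵥ w`, forces `w = 0`. Testing `v = y` then gives `|y ⬝ᵥ x| ≤ y ⬝ᵥ y`, i.e. `|α| ≤ 1`
(when `y = 0` the division by zero makes `α = 0`).
-/

section

variable {ι K : Type*} [Fintype ι]

theorem dotProduct_vecMulVec_self_mulVec [CommRing K] (v x : ι → K) :
    x ⬝ᵥ (vecMulVec v v *ᵥ x) = (v ⬝ᵥ x) ^ 2 := by
  rw [vecMulVec_mulVec, op_smul_eq_smul, dotProduct_smul, smul_eq_mul, dotProduct_comm, sq]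

variable [Field K] [LinearOrder K] [IsStrictOrderedRing K]

theorem eq_dotProduct_div_smul_of_orthogonal_imp {x y : ι → K}
    (h : ∀ v : ι → K, v ⬝ᵥ y = 0 → v ⬝ᵥ x = 0) :
    x = ((y ⬝ᵥ x) / (y ⬝ᵥ y)) • y := by
  set w := x - ((y ⬝ᵥ x) / (y ⬝ᵥ y)) • y
  have hwy : w ⬝ᵥ y = 0 := by
    by_cases hy : y = 0
    · simp [hy]
    have hyy : y ⬝ᵥ y ≠ 0 := dotProduct_self_eq_zero.not.mpr hy
    simp only [w, sub_dotProduct, smul_dotProduct, smul_eq_mul, dotProduct_comm x y]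
    field_simp
    ring
  have hww : w ⬝ᵥ w = 0 := by
    simp only [w, dotProduct_sub w, dotProduct_smul, smul_eq_mul, h w hwy, hwy, mul_zero, sub_zero]
  exact sub_eq_zero.mp (dotProduct_self_eq_zero.mp hww)

end

theorem collinear_of_rankOne_quadForm_le_general (n : ℕ) (x y : Fin n → ℝ)
    (hrank1 : ∀ v : Fin n → ℝ,
      x ⬝ᵥ ((vecMulVec v v) *ᵥ x) ≤ y ⬝ᵥ ((vecMulVec v v) *ᵥ y)) :
    ∃ α : ℝ, -1 ≤ α ∧ α ≤ 1 ∧ x = α • y := by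
  have habs : ∀ v, |v ⬝ᵥ x| ≤ |v ⬝ᵥ y| := fun v => by
    simpa only [dotProduct_vecMulVec_self_mulVec, sq_le_sq] using hrank1 v
  have hcollinear : x = ((y ⬝ᵥ x) / (y ⬝ᵥ y)) • y :=
    eq_dotProduct_div_smul_of_orthogonal_imp fun v hv =>
      abs_nonpos_iff.mp (by simpa [hv] using habs v)
  have hbound : |(y ⬝ᵥ x) / (y ⬝ᵥ y)| ≤ 1 := by
    rw [abs_div]
    exact div_le_one_of_le₀ (habs y) (abs_nonneg _)
  exact ⟨_, (abs_le.mp hbound).1, (abs_le.mp hbound).2, hcollinear⟩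

/-- It suffices to test rank-one PSD matrices `N = vvᵀ` together with the
identity: if `xᵀ(vvᵀ)x ≤ yᵀ(vvᵀ)y` for every `v` and `xᵀx ≤ yᵀy`, then
`x = α • y` for some `α ∈ [-1, 1]`. -/
theorem collinear_of_rankOne_quadForm_le (n : ℕ) (x y : Fin n → ℝ)
    (hrank1 : ∀ v : Fin n → ℝ,
      x ⬝ᵥ ((vecMulVec v v) *ᵥ x) ≤ y ⬝ᵥ ((vecMulVec v v) *ᵥ y))
    (hid : x ⬝ᵥ x ≤ y ⬝ᵥ y) :
    ∃ α : ℝ, -1 ≤ α ∧ α ≤ 1 ∧ x = α • y :=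
  collinear_of_rankOne_quadForm_le_general n x y hrank1
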